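/- Suppose T₀ ⊇ T₁ ⊇ T₂ ⊇ ... is a sequence of regular triangles in ℝ² where each Tₙ₊₁ is obtained from Tₙ by a binary starring (replacing one vertex by the Farey mediant of two vertices). If dₙ₁ ≤ dₙ₂ ≤ dₙ₃ denote the denominators of the vertices of Tₙ, then dₙ₃ → ∞ and consequently area(Tₙ) = 1/(2dₙ₁dₙ₂dₙ₃) → 0. -/

import Mathlib

/-!
A binary starring adds one row of the integer matrix of homogeneous vertex coordinates to
another. Hence the determinant stays `±1`, the denominators stay positive, and their sum
increases strictly at every step, so the largest denominator tends to infinity. A triangle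
with vertices `(pᵢ / dᵢ, qᵢ / dᵢ)` has area `|det| / (2 d₁ d₂ d₃)`, and
`max dᵢ ≤ d₁ d₂ d₃` then forces the areas to `0`.
-/

open MeasureTheory Filter Pointwise

local notation "ℝ²" => EuclideanSpace ℝ (Fin 2)

theorem volume_prod_stdTriangle :
    volume {p : ℝ × ℝ | 0 ≤ p.1 ∧ 0 ≤ p.2 ∧ p.1 + p.2 ≤ 1} = ENNReal.ofReal (1 / 2) := by
  have hmeas : MeasurableSet {p : ℝ × ℝ | 0 ≤ p.1 ∧ 0 ≤ p.2 ∧ p.1 + p.2 ≤ 1} :=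
    (measurableSet_le measurable_const measurable_fst).inter
      ((measurableSet_le measurable_const measurable_snd).inter
        (measurableSet_le (measurable_fst.add measurable_snd) measurable_const))
  have slice (x : ℝ) : volume (Prod.mk x ⁻¹' {p : ℝ × ℝ | 0 ≤ p.1 ∧ 0 ≤ p.2 ∧ p.1 + p.2 ≤ 1})
      = (Set.Icc 0 1).indicator (fun x => ENNReal.ofReal (1 - x)) x := by
    by_cases hx : 0 ≤ x
    · have : Prod.mk x ⁻¹' {p : ℝ × ℝ | 0 ≤ p.1 ∧ 0 ≤ p.2 ∧ p.1 + p.2 ≤ 1}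
          = Set.Icc 0 (1 - x) := by
        ext y
        simp only [Set.mem_preimage, Set.mem_ofPred_eq, Set.mem_Icc, hx, true_and,
          le_sub_iff_add_le']
      rw [this, Real.volume_Icc, sub_zero]
      by_cases hx1 : x ≤ 1
      · rw [Set.indicator_of_mem (Set.mem_Icc.2 ⟨hx, hx1⟩)]
      · rw [Set.indicator_of_notMem (by simp [hx1]), ENNReal.ofReal_eq_zero]
        linarith
    · have : Prod.mk x ⁻¹' {p : ℝ × ℝ | 0 ≤ p.1 ∧ 0 ≤ p.2 ∧ p.1 + p.2 ≤ 1} = ∅ := by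
        ext y; simp [hx]
      rw [this, Set.indicator_of_notMem (by simp [hx]), measure_empty]
  have hint : ∫ x in (0 : ℝ)..1, (1 - x) = 1 / 2 := by
    rw [intervalIntegral.integral_sub intervalIntegrable_const
      intervalIntegral.intervalIntegrable_id, integral_id]
    norm_num
  rw [Measure.volume_eq_prod, Measure.prod_apply hmeas]
  simp_rw [slice]
  rw [lintegral_indicator measurableSet_Icc, ← hint, intervalIntegral.integral_of_le zero_le_one,
    ← integral_Icc_eq_integral_Ioc, ofReal_integral_eq_lintegral_ofReal]
  · exact (continuous_const.sub continuous_id).integrableOn_Icc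
  · filter_upwards [ae_restrict_mem measurableSet_Icc] with x hx
    exact sub_nonneg.2 hx.2

theorem volume_stdTriangle :
    volume {x : ℝ² | 0 ≤ x 0 ∧ 0 ≤ x 1 ∧ x 0 + x 1 ≤ 1} = ENNReal.ofReal (1 / 2) := by
  have hmp : MeasurePreserving
      ((MeasurableEquiv.toLp 2 (Fin 2 → ℝ)).symm.trans MeasurableEquiv.finTwoArrow) :=
    (volume_preserving_finTwoArrow ℝ).comp
      (EuclideanSpace.volume_preserving_symm_measurableEquiv_toLp (Fin 2))
  rw [← volume_prod_stdTriangle, ← hmp.measure_preimage_equiv]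
  rfl

theorem convexHull_zero_single_single :
    convexHull ℝ {0, EuclideanSpace.single 0 1, EuclideanSpace.single 1 1}
      = {x : ℝ² | 0 ≤ x 0 ∧ 0 ≤ x 1 ∧ x 0 + x 1 ≤ 1} := by
  apply le_antisymm
  · refine convexHull_min ?_ ?_
    · rintro x (rfl | rfl | rfl) <;> norm_num [PiLp.single_apply]
    · rintro x ⟨hx0, hx1, hxs⟩ y ⟨hy0, hy1, hys⟩ s t hs ht hst
      simp only [Set.mem_ofPred_eq, PiLp.add_apply, PiLp.smul_apply, smul_eq_mul]
      refine ⟨by positivity, by positivity, by nlinarith⟩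
  · rintro x ⟨h0, h1, hs⟩
    have hx : x = ∑ i, ![1 - x 0 - x 1, x 0, x 1] i
        • ![0, EuclideanSpace.single 0 1, EuclideanSpace.single 1 1] i := by
      ext k; fin_cases k <;> simp [Fin.sum_univ_three]
    rw [hx]
    refine (convex_convexHull ℝ _).sum_mem (fun i _ => ?_) (by simp [Fin.sum_univ_three]; ring)
      (fun i _ => subset_convexHull ℝ _ (by fin_cases i <;> simp))
    fin_cases i <;> simp <;> linarith

theorem volume_convexHull_triangle (a b c : ℝ²) :
    volume (convexHull ℝ {a, b, c}) =
      ENNReal.ofReal (|(b 0 - a 0) * (c 1 - a 1) - (c 0 - a 0) * (b 1 - a 1)| / 2) := by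
  set M : Matrix (Fin 2) (Fin 2) ℝ := !![b 0 - a 0, c 0 - a 0; b 1 - a 1, c 1 - a 1]
  set L : ℝ² →ₗ[ℝ] ℝ² := Matrix.toLpLin 2 2 M
  have hL :
      L '' {0, EuclideanSpace.single 0 1, EuclideanSpace.single 1 1} = {0, b - a, c - a} := by
    have h0 : L (EuclideanSpace.single 0 1) = b - a := by
      ext k; fin_cases k <;> simp [L, M, Matrix.toLpLin_apply]
    have h1 : L (EuclideanSpace.single 1 1) = c - a := by
      ext k; fin_cases k <;> simp [L, M, Matrix.toLpLin_apply]
    simp only [Set.image_insert_eq, Set.image_singleton, map_zero, h0, h1]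
  have htri : convexHull ℝ {a, b, c} =
      a +ᵥ L '' convexHull ℝ {0, EuclideanSpace.single 0 1, EuclideanSpace.single 1 1} := by
    rw [L.image_convexHull, hL, ← convexHull_vadd]
    simp [Set.vadd_set_insert]
  rw [htri, measure_vadd, Measure.addHaar_image_linearMap, LinearMap.det_toLpLin,
    convexHull_zero_single_single, volume_stdTriangle, ← ENNReal.ofReal_mul (abs_nonneg _),
    Matrix.det_fin_two_of]
  ring_nf

noncomputable def dehomogenize (w : Fin 3 → ℝ) : ℝ² :=
  WithLp.toLp 2 ![w 0 / w 2, w 1 / w 2]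

theorem volume_convexHull_dehomogenize (w : Fin 3 → Fin 3 → ℝ) (hw : ∀ i, w i 2 ≠ 0) :
    volume (convexHull ℝ (Set.range fun i => dehomogenize (w i))) =
      ENNReal.ofReal (|(Matrix.of w).det| / (2 * |w 0 2 * w 1 2 * w 2 2|)) := by
  have hrange : Set.range (fun i => dehomogenize (w i))
      = {dehomogenize (w 0), dehomogenize (w 1), dehomogenize (w 2)} := by
    ext x; simp [Fin.exists_fin_succ, eq_comm]
  have hcross : (w 1 0 / w 1 2 - w 0 0 / w 0 2) * (w 2 1 / w 2 2 - w 0 1 / w 0 2)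
      - (w 2 0 / w 2 2 - w 0 0 / w 0 2) * (w 1 1 / w 1 2 - w 0 1 / w 0 2)
      = (Matrix.of w).det / (w 0 2 * w 1 2 * w 2 2) := by
    have h0 := hw 0; have h1 := hw 1; have h2 := hw 2
    simp only [Matrix.det_fin_three, Matrix.of_apply]
    field_simp
    ring
  rw [hrange, volume_convexHull_triangle]
  simp only [dehomogenize, PiLp.toLp_apply, Matrix.cons_val_zero, Matrix.cons_val_one]
  rw [hcross, abs_div, div_div, mul_comm]

theorem volume_convexHull_of_unimodular (w : Fin 3 → Fin 3 → ℤ) (hw : ∀ i, 0 < w i 2)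
    (hdet : (Matrix.of w).det = 1 ∨ (Matrix.of w).det = -1) :
    volume (convexHull ℝ {x | ∃ i : Fin 3,
        x = WithLp.toLp 2 ![(w i 0 : ℝ) / (w i 2 : ℝ), (w i 1 : ℝ) / (w i 2 : ℝ)]}) =
      ENNReal.ofReal (1 / (2 * (w 0 2) * (w 1 2) * (w 2 2))) := by
  have hrange : {x | ∃ i : Fin 3,
        x = WithLp.toLp 2 ![(w i 0 : ℝ) / (w i 2 : ℝ), (w i 1 : ℝ) / (w i 2 : ℝ)]}
      = Set.range fun i => dehomogenize fun k => (w i k : ℝ) := by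
    ext x; simp [dehomogenize, eq_comm]
  have hcast : (Matrix.of fun i k => (w i k : ℝ)).det = ((Matrix.of w).det : ℝ) :=
    ((Int.castRingHom ℝ).map_det _).symm
  have habs : |(Matrix.of fun i k => (w i k : ℝ)).det| = 1 := by
    rcases hdet with h | h <;> simp [hcast, h]
  have := hw 0; have := hw 1; have := hw 2
  rw [hrange, volume_convexHull_dehomogenize _ fun i => by exact_mod_cast (hw i).ne', habs,
    abs_of_pos (by positivity), ← mul_assoc, ← mul_assoc]

theorem max_max_le_mul_mul {a b c : ℤ} (ha : 0 < a) (hb : 0 < b) (hc : 0 < c) :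
    max a (max b c) ≤ a * b * c := by
  have hab : 1 ≤ a * b := mul_pos ha hb
  have hbc : 1 ≤ b * c := mul_pos hb hc
  have hac : 1 ≤ a * c := mul_pos ha hc
  refine max_le ?_ (max_le ?_ ?_) <;> nlinarith

theorem tendsto_ofReal_inv_mul_mul_of_tendsto_max {d : ℕ → Fin 3 → ℤ} (hd : ∀ n i, 0 < d n i)
    (hmax : Tendsto (fun n => max (d n 0) (max (d n 1) (d n 2))) atTop atTop) :
    Tendsto (fun n => ENNReal.ofReal (1 / (2 * (d n 0) * (d n 1) * (d n 2)))) atTop (nhds 0) := by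
  have hprod : Tendsto (fun n => 2 * d n 0 * d n 1 * d n 2) atTop atTop := by
    refine tendsto_atTop_mono (fun n => ?_) hmax
    have := mul_pos (mul_pos (hd n 0) (hd n 1)) (hd n 2)
    exact (max_max_le_mul_mul (hd n 0) (hd n 1) (hd n 2)).trans (by linarith)
  have hprodℝ : Tendsto (fun n => (2 * d n 0 * d n 1 * d n 2 : ℝ)) atTop atTop := by
    simpa [Function.comp_def] using (tendsto_intCast_atTop_atTop (R := ℝ)).comp hprod
  simpa only [one_div, Pi.inv_apply, ENNReal.ofReal_zero] using
    ENNReal.tendsto_ofReal hprodℝ.inv_tendsto_atTop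

section BinaryStarring

variable {ι α : Type*}

/-- In homogeneous coordinates, replacing `w i` by `w i + w j` is the Farey mediant. -/
def IsBinaryStarring [Add α] (w w' : ι → α) : Prop :=
  ∃ i j, i ≠ j ∧ w' i = w i + w j ∧ ∀ k, k ≠ i → w' k = w k

namespace IsBinaryStarring

theorem apply {κ : Type*} [Add α] {w w' : ι → κ → α} (h : IsBinaryStarring w w') (c : κ) :
    IsBinaryStarring (fun i => w i c) (fun i => w' i c) := by
  obtain ⟨i, j, hij, hi, hk⟩ := h
  exact ⟨i, j, hij, congrFun hi c, fun k hki => congrFun (hk k hki) c⟩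

theorem det_eq {R : Type*} [CommRing R] [Fintype ι] [DecidableEq ι] {w w' : ι → ι → R}
    (h : IsBinaryStarring w w') : (Matrix.of w').det = (Matrix.of w).det := by
  obtain ⟨i, j, hij, hi, hk⟩ := h
  have : Matrix.of w' = (Matrix.of w).updateRow i (Matrix.of w i + Matrix.of w j) := by
    ext k l
    by_cases hki : k = i
    · subst hki; simp [hi]
    · simp [hki, hk k hki]
  rw [this, Matrix.det_updateRow_add_self _ hij]

variable [AddCommMonoid α] [PartialOrder α] [IsOrderedCancelAddMonoid α] {w w' : ι → α}

theorem pos (h : IsBinaryStarring w w') (hw : ∀ i, 0 < w i) (k : ι) : 0 < w' k := by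
  obtain ⟨i, j, -, hi, hk⟩ := h
  by_cases hki : k = i
  · rw [hki, hi]; exact add_pos (hw i) (hw j)
  · rw [hk k hki]; exact hw k

theorem sum_lt [Fintype ι] (h : IsBinaryStarring w w') (hw : ∀ i, 0 < w i) :
    ∑ i, w i < ∑ i, w' i := by
  obtain ⟨i, j, -, hi, hk⟩ := h
  have hle (k : ι) : w k ≤ w' k := by
    by_cases hki : k = i
    · rw [hki, hi]; exact le_add_of_nonneg_right (hw j).le
    · rw [hk k hki]
  refine Finset.sum_lt_sum (fun k _ => hle k) ⟨i, Finset.mem_univ _, ?_⟩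
  rw [hi]; exact lt_add_of_pos_right _ (hw j)

end IsBinaryStarring

theorem pos_of_forall_isBinaryStarring [AddCommMonoid α] [PartialOrder α]
    [IsOrderedCancelAddMonoid α] {w : ℕ → ι → α} (hstar : ∀ n, IsBinaryStarring (w n) (w (n + 1)))
    (h0 : ∀ i, 0 < w 0 i) (n : ℕ) (i : ι) : 0 < w n i := by
  induction n generalizing i with
  | zero => exact h0 i
  | succ n ih => exact (hstar n).pos ih i

theorem tendsto_sum_atTop_of_forall_isBinaryStarring [Fintype ι] {w : ℕ → ι → ℤ}
    (hstar : ∀ n, IsBinaryStarring (w n) (w (n + 1))) (h0 : ∀ i, 0 < w 0 i) :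
    Tendsto (fun n => ∑ i, w n i) atTop atTop := by
  have hgrowth (n : ℕ) : ∑ i, w 0 i + n ≤ ∑ i, w n i := by
    induction n with
    | zero => simp
    | succ n ih =>
      have := (hstar n).sum_lt (pos_of_forall_isBinaryStarring hstar h0 n)
      push_cast; omega
  exact tendsto_atTop_mono hgrowth (tendsto_atTop_add_const_left _ _ tendsto_natCast_atTop_atTop)

theorem det_eq_of_forall_isBinaryStarring {R : Type*} [CommRing R] [Fintype ι] [DecidableEq ι]
    {w : ℕ → ι → ι → R} (hstar : ∀ n, IsBinaryStarring (w n) (w (n + 1))) (n : ℕ) :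
    (Matrix.of (w n)).det = (Matrix.of (w 0)).det := by
  induction n with
  | zero => rfl
  | succ n ih => rw [(hstar n).det_eq, ih]

theorem tendsto_max_atTop_of_forall_isBinaryStarring {w : ℕ → Fin 3 → ℤ}
    (hstar : ∀ n, IsBinaryStarring (w n) (w (n + 1))) (h0 : ∀ i, 0 < w 0 i) :
    Tendsto (fun n => max (w n 0) (max (w n 1) (w n 2))) atTop atTop := by
  refine Tendsto.atTop_of_const_mul₀ (c := 3) (by norm_num) (tendsto_atTop_mono (fun n => ?_)
    (tendsto_sum_atTop_of_forall_isBinaryStarring hstar h0))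
  simp only [Fin.sum_univ_three]
  omega

end BinaryStarring

/-- Along a sequence of binary starrings of regular triangles, the largest vertex
denominator tends to infinity and hence the areas `1/(2d₁d₂d₃)` tend to `0`. -/
theorem stmt15 (v : ℕ → Fin 3 → Fin 3 → ℤ)
    (hpos : ∀ i, 0 < v 0 i 2)
    (hdet : (Matrix.of (v 0)).det = 1 ∨ (Matrix.of (v 0)).det = -1)
    (hstar : ∀ n, ∃ i j : Fin 3, i ≠ j ∧ v (n + 1) i = v n i + v n j ∧
      ∀ k, k ≠ i → v (n + 1) k = v n k)
    (T : ℕ → Set (EuclideanSpace ℝ (Fin 2)))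
    (hT : ∀ n, T n = convexHull ℝ
      {x | ∃ i : Fin 3, x = WithLp.toLp 2 ![(v n i 0 : ℝ) / (v n i 2 : ℝ), (v n i 1 : ℝ) / (v n i 2 : ℝ)]}) :
    Tendsto (fun n => max (v n 0 2) (max (v n 1 2) (v n 2 2))) atTop atTop ∧
    (∀ n, volume (T n) = ENNReal.ofReal (1 / (2 * (v n 0 2) * (v n 1 2) * (v n 2 2)))) ∧
    Tendsto (fun n => volume (T n)) atTop (nhds 0) := by
  have hden (n : ℕ) : IsBinaryStarring (fun i => v n i 2) (fun i => v (n + 1) i 2) :=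
    IsBinaryStarring.apply (hstar n) 2
  have hdpos := pos_of_forall_isBinaryStarring hden hpos
  have harea (n : ℕ) :
      volume (T n) = ENNReal.ofReal (1 / (2 * (v n 0 2) * (v n 1 2) * (v n 2 2))) := by
    rw [hT n, volume_convexHull_of_unimodular (v n) (hdpos n)]
    rwa [det_eq_of_forall_isBinaryStarring hstar n]
  have hmax := tendsto_max_atTop_of_forall_isBinaryStarring hden hpos
  refine ⟨hmax, harea, ?_⟩
  simpa only [harea] using
    tendsto_ofReal_inv_mul_mul_of_tendsto_max (d := fun n i => v n i 2) hdpos hmax
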